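/- arXiv:1511.08337 — 2 statements merged into one kernel-verified Lean document; each statement's English description precedes it below -/
import Mathlib

section
/- Let K be a nonempty closed convex subset of a Hilbert space H, a(·,·) a continuous coercive symmetric bilinear form on H, and f a continuous linear functional. Then u ∈ K minimizes (1/2)a(v,v) − f(v) over K if and only if a(u, v − u) ≥ f(v − u) for all v ∈ K. -/
/-!
Writing `J v = ½ a(v,v) - f(v)`, symmetry of `a` gives the exact expansion
`J(u + t w) = J(u) + t (a(u,w) - f(w)) + ½ t² a(w,w)`.
If `u` minimizes `J` on `K`, take `w = v - u` and `t ∈ (0,1]`, so that `u + t w ∈ K` by convexity;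
dividing by `t` and letting `t → 0⁺` kills the quadratic term and leaves the variational
inequality. Conversely, at `t = 1` the linear term is nonnegative by the variational inequality
and the quadratic term by positivity of `a`.
-/

open Set Filter Topology

lemma nonneg_of_forall_mul_add_sq_mul_nonneg {b c : ℝ}
    (h : ∀ t ∈ Ioc (0 : ℝ) 1, 0 ≤ t * b + t ^ 2 * c) : 0 ≤ b := by
  have hlim : Tendsto (fun t : ℝ => b + t * c) (𝓝[>] 0) (𝓝 b) := by
    have hcont : Continuous fun t : ℝ => b + t * c := by fun_prop
    simpa using (hcont.tendsto 0).mono_left nhdsWithin_le_nhds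
  refine ge_of_tendsto hlim ?_
  filter_upwards [Ioc_mem_nhdsGT one_pos] with t ht
  refine nonneg_of_mul_nonneg_right ?_ ht.1
  linarith [h t ht]

section QuadraticEnergy

variable {E : Type*} [AddCommGroup E] [Module ℝ E]
  (a : E →ₗ[ℝ] E →ₗ[ℝ] ℝ) (f : E →ₗ[ℝ] ℝ)

noncomputable def quadraticEnergy (v : E) : ℝ := 1 / 2 * a v v - f v

variable {a}

lemma quadraticEnergy_add_smul (hsymm : ∀ v w, a v w = a w v) (u w : E) (t : ℝ) :
    quadraticEnergy a f (u + t • w) =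
      quadraticEnergy a f u + t * (a u w - f w) + t ^ 2 / 2 * a w w := by
  simp only [quadraticEnergy, map_add, map_smul, LinearMap.add_apply, LinearMap.smul_apply,
    smul_eq_mul, hsymm w u]
  ring

lemma variationalInequality_of_isMinOn (hsymm : ∀ v w, a v w = a w v) {K : Set E}
    (hK : Convex ℝ K) {u : E} (hu : u ∈ K) (hmin : IsMinOn (quadraticEnergy a f) K u) :
    ∀ v ∈ K, f (v - u) ≤ a u (v - u) := by
  intro v hv
  suffices 0 ≤ a u (v - u) - f (v - u) by linarith
  refine nonneg_of_forall_mul_add_sq_mul_nonneg (c := a (v - u) (v - u) / 2) fun t ht => ?_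
  have hJ := isMinOn_iff.1 hmin _ (hK.add_smul_sub_mem hu hv (Ioc_subset_Icc_self ht))
  rw [quadraticEnergy_add_smul f hsymm] at hJ
  linarith

lemma isMinOn_of_variationalInequality (hsymm : ∀ v w, a v w = a w v)
    (hpos : ∀ w, 0 ≤ a w w) {K : Set E} {u : E} (hvi : ∀ v ∈ K, f (v - u) ≤ a u (v - u)) :
    IsMinOn (quadraticEnergy a f) K u := by
  refine isMinOn_iff.2 fun v hv => ?_
  have hJ := quadraticEnergy_add_smul f hsymm u (v - u) 1
  rw [one_smul, add_sub_cancel] at hJ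
  nlinarith [hvi v hv, hpos (v - u)]

end QuadraticEnergy

theorem minimizer_iff_variational_inequality_general
    {H : Type*} [NormedAddCommGroup H] [InnerProductSpace ℝ H]
    (a : H →ₗ[ℝ] H →ₗ[ℝ] ℝ) (hsymm : ∀ v w, a v w = a w v)
    (α : ℝ) (hα : 0 < α) (hcoer : ∀ v, α * ‖v‖ ^ 2 ≤ a v v)
    (f : H →L[ℝ] ℝ)
    (K : Set H) (hKcv : Convex ℝ K)
    (u : H) (huK : u ∈ K) :
    (∀ v ∈ K, (1 / 2) * a u u - f u ≤ (1 / 2) * a v v - f v) ↔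
      (∀ v ∈ K, f (v - u) ≤ a u (v - u)) := by
  have hpos : ∀ w, 0 ≤ a w w := fun w => (by positivity : 0 ≤ α * ‖w‖ ^ 2).trans (hcoer w)
  exact ⟨fun hmin => variationalInequality_of_isMinOn (f : H →ₗ[ℝ] ℝ) hsymm hKcv huK
      (isMinOn_iff.2 hmin),
    fun hvi => isMinOn_iff.1 (isMinOn_of_variationalInequality (f : H →ₗ[ℝ] ℝ) hsymm hpos hvi)⟩

/-- Characterization of the minimizer of `v ↦ (1/2) a(v,v) - f(v)` over a nonempty
closed convex subset `K` of a real Hilbert space by the variational inequality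
`a(u, v - u) ≥ f(v - u)` for all `v ∈ K`, for a continuous coercive symmetric
bilinear form `a` and a continuous linear functional `f`. -/
theorem minimizer_iff_variational_inequality
    {H : Type*} [NormedAddCommGroup H] [InnerProductSpace ℝ H] [CompleteSpace H]
    (a : H →ₗ[ℝ] H →ₗ[ℝ] ℝ) (hsymm : ∀ v w, a v w = a w v)
    (Cb : ℝ) (hbdd : ∀ v w, |a v w| ≤ Cb * ‖v‖ * ‖w‖)
    (α : ℝ) (hα : 0 < α) (hcoer : ∀ v, α * ‖v‖ ^ 2 ≤ a v v)
    (f : H →L[ℝ] ℝ)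
    (K : Set H) (hKne : K.Nonempty) (hKcl : IsClosed K) (hKcv : Convex ℝ K)
    (u : H) (huK : u ∈ K) :
    (∀ v ∈ K, (1 / 2) * a u u - f u ≤ (1 / 2) * a v v - f v) ↔
      (∀ v ∈ K, f (v - u) ≤ a u (v - u)) :=
  minimizer_iff_variational_inequality_general a hsymm α hα hcoer f K hKcv u huK
end

section
/- Let u ∈ K solve the continuous obstacle problem with Lagrange multiplier measure λ, and let λ_h = Σ_{p∈V_h} λ_h(p)δ_p with λ_h(p) ≥ 0 be the discrete Lagrange multiplier satisfying the discrete complementarity Σ_p λ_h(p)(u_h(p) − ψ(p)) = 0, and let z_h ∈ H²₀(Ω) satisfy a(z_h, v) = (f,v) + Σ_p λ_h(p)v(p) for all v ∈ H²₀(Ω). Then for any w ∈ H²₀(Ω) with w(p) = u_h(p) for all p ∈ V_h, one has a(u − z_h, u − w) ≤ ∫_Ω (ψ − w)⁺ dλ. -/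
open MeasureTheory

/-- Key estimate in the reliability proof: if `u` solves the continuous obstacle
problem with multiplier measure `λ` (so `a(u,v) = (f,v) + ∫ v dλ` for `v ∈ H²₀(Ω)`,
`∫(u - ψ)dλ = 0`, `u ≥ ψ`), the discrete multiplier is `λ_h = Σ_{p ∈ P} c_p δ_p`
with `c_p ≥ 0`, discrete complementarity `Σ_p c_p (u_h(p) - ψ(p)) = 0` and
`u_h(p) ≥ ψ(p)`, and `z_h` satisfies `a(z_h,v) = (f,v) + Σ_p c_p v(p)`, then for
any `w ∈ H²₀(Ω)` with `w(p) = u_h(p)` for all vertices `p`,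
`a(u - z_h, u - w) ≤ ∫ (ψ - w)⁺ dλ`. -/
theorem key_reliability_estimate
    {X : Type*} [MeasurableSpace X]
    (a : (X → ℝ) → (X → ℝ) → ℝ) (f : (X → ℝ) → ℝ)
    (H20 : Set (X → ℝ))
    (u zh w ψ uh : X → ℝ)
    (lam : Measure X) [IsFiniteMeasure lam]
    (P : Finset X) (c : X → ℝ) (hc : ∀ p ∈ P, 0 ≤ c p)
    (hbilin : ∀ v : X → ℝ, a (u - zh) v = a u v - a zh v)
    (hmem : u - w ∈ H20)
    (hu : ∀ v ∈ H20, a u v = f v + ∫ x, v x ∂lam)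
    (hz : ∀ v ∈ H20, a zh v = f v + ∑ p ∈ P, c p * v p)
    (hint1 : Integrable (fun x => u x - w x) lam)
    (hint2 : Integrable (fun x => u x - ψ x) lam)
    (hcompl : ∫ x, (u x - ψ x) ∂lam = 0)
    (huψ : ∀ x, ψ x ≤ u x)
    (hdc : ∑ p ∈ P, c p * (uh p - ψ p) = 0)
    (huh : ∀ p ∈ P, ψ p ≤ uh p)
    (hw : ∀ p ∈ P, w p = uh p) :
    a (u - zh) (u - w) ≤ ∫ x, max (ψ x - w x) 0 ∂lam := by
  have hIψw : Integrable (fun x => ψ x - w x) lam := by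
    have heq : (fun x => ψ x - w x) = ((fun x => u x - w x) - fun x => u x - ψ x) := by
      funext x; simp [Pi.sub_apply]
    rw [heq]; exact hint1.sub hint2
  have key : a (u - zh) (u - w) =
      (∫ x, (ψ x - w x) ∂lam) - ∑ p ∈ P, c p * (u p - ψ p) := by
    rw [hbilin, hu _ hmem, hz _ hmem]
    have h1 : ∫ x, (u - w) x ∂lam = ∫ x, (ψ x - w x) ∂lam := by
      have : (fun x => (u - w) x) = fun x => (u x - ψ x) + (ψ x - w x) := by
        funext x; simp [Pi.sub_apply]
      rw [this, integral_add hint2 hIψw, hcompl, zero_add]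
    have h2 : ∑ p ∈ P, c p * (u - w) p = ∑ p ∈ P, c p * (u p - ψ p) := by
      have : ∀ p ∈ P, c p * (u - w) p = c p * (u p - ψ p) - c p * (uh p - ψ p) := by
        intro p hp
        simp only [Pi.sub_apply, hw p hp]; ring
      rw [Finset.sum_congr rfl this, Finset.sum_sub_distrib, hdc, sub_zero]
    rw [h1, h2]; ring
  rw [key]
  have hsum : 0 ≤ ∑ p ∈ P, c p * (u p - ψ p) :=
    Finset.sum_nonneg fun p hp => mul_nonneg (hc p hp) (sub_nonneg.2 (huψ p))
  have hInt : (∫ x, (ψ x - w x) ∂lam) ≤ ∫ x, max (ψ x - w x) 0 ∂lam := by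
    refine integral_mono hIψw ?_ fun x => le_max_left _ _
    exact hIψw.sup (integrable_zero _ _ _)
  linarith
end
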